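/- With the notation of the previous statement (basis $v_1,\ldots,v_d$ generating a cone $\sigma$, dual cone $A_\mathbb{R} = \sigma^\vee$, $w$ in $\sigma$ with $(v_i^\ast,w)>0$, rescaled dual vectors $u_j$, cone $\delta_i$, and linear function $f_i(x) = x\,(u_i, v_i)$): for every $c > 0$, the level $\leq c$ subpolyhedron $\Lambda^w_{(\leq c)} = A_\mathbb{R} \cap \{a : (a,w) \leq c\}$ satisfies $\Lambda^w_{(\leq c)} = \big(\delta_i^\vee \cap \{a : (a, -v_i) \leq f_i(c)\}\big) + c\,u_i$, where the sum means translation of the set by the vector $c\,u_i$. -/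
import Mathlib


/-- Standard pairing on `ℝ^d`. -/
def dot {d : ℕ} (x y : Fin d → ℝ) : ℝ := ∑ i, x i * y i

/-- The cone generated by a set: all finite nonnegative combinations. -/
def coneOf {d : ℕ} (S : Set (Fin d → ℝ)) : Set (Fin d → ℝ) :=
  {x | ∃ (n : ℕ) (c : Fin n → ℝ) (y : Fin n → (Fin d → ℝ)),
    (∀ j, 0 ≤ c j) ∧ (∀ j, y j ∈ S) ∧ x = ∑ j, c j • y j}

/-- The dual cone of a set. -/
def dualCone {d : ℕ} (S : Set (Fin d → ℝ)) : Set (Fin d → ℝ) :=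
  {a | ∀ x ∈ S, 0 ≤ dot a x}

lemma dot_add_left {d : ℕ} (a b x : Fin d → ℝ) : dot (a + b) x = dot a x + dot b x := by
  simp [dot, add_mul, Finset.sum_add_distrib]

lemma dot_sub_left {d : ℕ} (a b x : Fin d → ℝ) : dot (a - b) x = dot a x - dot b x := by
  simp [dot, sub_mul, Finset.sum_sub_distrib]

lemma dot_smul_left {d : ℕ} (r : ℝ) (a x : Fin d → ℝ) : dot (r • a) x = r * dot a x := by
  simp [dot, Finset.mul_sum, mul_assoc]

lemma dot_neg_right {d : ℕ} (a x : Fin d → ℝ) : dot a (-x) = -dot a x := by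
  simp [dot, Finset.sum_neg_distrib]

lemma dot_smul_right {d : ℕ} (r : ℝ) (a x : Fin d → ℝ) : dot a (r • x) = r * dot a x := by
  simp only [dot, Pi.smul_apply, smul_eq_mul, Finset.mul_sum]
  exact Finset.sum_congr rfl fun _ _ => by ring

lemma dot_sum_right {d n : ℕ} (a : Fin d → ℝ) (f : Fin n → Fin d → ℝ) :
    dot a (∑ j, f j) = ∑ j, dot a (f j) := by
  simp only [dot, Finset.sum_apply, Finset.mul_sum]
  exact Finset.sum_comm

lemma mem_dualCone_coneOf {d : ℕ} (S : Set (Fin d → ℝ)) (a : Fin d → ℝ) :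
    a ∈ dualCone (coneOf S) ↔ ∀ x ∈ S, 0 ≤ dot a x := by
  constructor
  · intro h x hx
    exact h x ⟨1, fun _ => 1, fun _ => x, fun _ => zero_le_one, fun _ => hx, by simp⟩
  · rintro h x ⟨n, cc, y, hcc, hy, rfl⟩
    rw [dot_sum_right]
    refine Finset.sum_nonneg fun j _ => ?_
    rw [dot_smul_right]
    exact mul_nonneg (hcc j) (h _ (hy j))

theorem stmt_2 {d : ℕ} (v vstar : Fin d → (Fin d → ℝ))
    (hdual : ∀ j k, dot (vstar j) (v k) = if j = k then 1 else 0)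
    (i : Fin d) (w : Fin d → ℝ) (hw : w ∈ coneOf (Set.range v))
    (hwi : 0 < dot (vstar i) w)
    (u : Fin d → (Fin d → ℝ))
    (hu : ∀ j, u j = if dot (vstar j) w = 0 then vstar j
      else (dot (vstar j) w)⁻¹ • vstar j)
    (c : ℝ) (hc : 0 < c) :
    dualCone (coneOf (Set.range v)) ∩ {a | dot a w ≤ c} =
      (fun a => a + c • u i) ''
        (dualCone (coneOf (Set.range (Function.update v i (-w)))) ∩
          {a | dot a (-(v i)) ≤ c * dot (u i) (v i)}) := by
  have hwine : dot (vstar i) w ≠ 0 := ne_of_gt hwi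
  have hui : u i = (dot (vstar i) w)⁻¹ • vstar i := by
    rw [hu i, if_neg hwine]
  have huiv : ∀ k, dot (u i) (v k) = (dot (vstar i) w)⁻¹ * (if i = k then 1 else 0) := by
    intro k
    rw [hui, dot_smul_left, hdual i k]
  have huiw : dot (u i) w = 1 := by
    rw [hui, dot_smul_left, inv_mul_cancel₀ hwine]
  ext a
  simp only [Set.mem_inter_iff, Set.mem_setOf_eq, Set.mem_image,
    mem_dualCone_coneOf, Set.forall_mem_range]
  constructor
  · rintro ⟨h1, h2⟩
    refine ⟨a - c • u i, ⟨⟨fun k => ?_, ?_⟩, by abel⟩⟩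
    · rcases eq_or_ne k i with rfl | hk
      · rw [Function.update_self, dot_neg_right, dot_sub_left, dot_smul_left, huiw]
        linarith
      · rw [Function.update_of_ne hk, dot_sub_left, dot_smul_left, huiv k,
          if_neg (Ne.symm hk)]
        simpa using h1 k
    · rw [dot_neg_right, dot_sub_left, dot_smul_left, huiv i, if_pos rfl]
      have := h1 i
      nlinarith [h1 i]
  · rintro ⟨b, ⟨hb1, hb2⟩, rfl⟩
    constructor
    · intro k
      rcases eq_or_ne k i with rfl | hk
      · have h := hb2
        rw [dot_neg_right, huiv k, if_pos rfl] at h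
        rw [dot_add_left, dot_smul_left, huiv k, if_pos rfl]
        linarith
      · have h := hb1 k
        rw [Function.update_of_ne hk] at h
        rw [dot_add_left, dot_smul_left, huiv k, if_neg (Ne.symm hk)]
        simpa using h
    · have h := hb1 i
      rw [Function.update_self, dot_neg_right] at h
      rw [dot_add_left, dot_smul_left, huiw]
      linarith
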